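/- arXiv:1403.8038 — 5 statements merged into one kernel-verified Lean document; each statement's English description precedes it below -/
import Mathlib

section
/- There is an absolute constant K > 0 with the following property. Let I be a compact interval, let h ∈ C²(I), set δ₁ = min_{x∈I} |h'(x)| and δ₂ = min_{x∈I} |h''(x)|, and for η > 0 let E(η) := {x ∈ I : |h(x)| < η}. If δ₁ > 0 then the Lebesgue measure of E(η) satisfies |E(η)| ≤ K·η/δ₁, and if δ₂ > 0 then |E(η)| ≤ K·√(η/δ₂). -/
/-!
If `|h'| ≥ δ` on an interval then `h'` has constant sign, so `h` (or `-h`) expands distances by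
the factor `δ`; two points where `|h| < η` are then at distance less than `2η/δ`.
If `|h''| ≥ δ`, say `h'' ≥ δ`, split the sublevel set according to the size of `h'` at the
scale `l = δ √(η/δ)`: where `h' ≥ l` or `h' ≤ -l` the first-order bound applies with `δ := l`
(using that `h'` is increasing), and `{|h'| < l}` is a sublevel set of `h'`, to which the
first-order bound applies with `δ`. Each of the three pieces has measure at most `2 √(η/δ)`.
-/

open MeasureTheory Set

theorem volume_le_of_forall_sub_le {S : Set ℝ} {d : ℝ}
    (hS : ∀ x ∈ S, ∀ y ∈ S, x ≤ y → y - x ≤ d) : volume S ≤ ENNReal.ofReal d := by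
  refine (Real.volume_le_diam S).trans (Metric.ediam_le fun x hx y hy => ?_)
  rw [edist_dist, Real.dist_eq]
  refine ENNReal.ofReal_le_ofReal ?_
  rcases le_total x y with hxy | hyx
  · rw [abs_sub_comm, abs_of_nonneg (sub_nonneg.2 hxy)]
    exact hS x hx y hy hxy
  · rw [abs_of_nonneg (sub_nonneg.2 hyx)]
    exact hS y hy x hx hyx

theorem volume_le_of_mul_sub_le {S : Set ℝ} {f : ℝ → ℝ} {c η : ℝ} (hc : 0 < c)
    (hf : ∀ x ∈ S, ∀ y ∈ S, x ≤ y → c * (y - x) ≤ f y - f x) (hS : ∀ x ∈ S, |f x| < η) :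
    volume S ≤ ENNReal.ofReal (2 * η / c) := by
  refine volume_le_of_forall_sub_le fun x hx y hy hxy => ?_
  rw [le_div_iff₀ hc]
  linarith [hf x hx y hy hxy, hS x hx, hS y hy, le_abs_self (f y), neg_abs_le (f x)]

theorem mul_sub_le_sub_of_le_derivWithin {a b x y c : ℝ} {f : ℝ → ℝ}
    (hf : DifferentiableOn ℝ f (Icc a b)) (hx : a ≤ x) (hy : y ≤ b) (hxy : x ≤ y)
    (hc : ∀ z ∈ Ioo x y, c ≤ derivWithin f (Icc a b) z) : c * (y - x) ≤ f y - f x := by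
  have hsub : Icc x y ⊆ Icc a b := Icc_subset_Icc hx hy
  have hderiv : ∀ z ∈ Ioo x y, derivWithin f (Icc a b) z = deriv f z := fun z hz =>
    derivWithin_of_mem_nhds (Icc_mem_nhds (hx.trans_lt hz.1) (hz.2.trans_le hy))
  refine (convex_Icc x y).mul_sub_le_image_sub_of_le_deriv (hf.mono hsub).continuousOn
    ((hf.mono hsub).mono interior_subset) ?_ x (left_mem_Icc.2 hxy) y (right_mem_Icc.2 hxy) hxy
  rw [interior_Icc]
  exact fun z hz => hderiv z hz ▸ hc z hz

theorem IsPreconnected.forall_le_or_forall_le_neg {α : Type*} [TopologicalSpace α] {S : Set α}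
    (hS : IsPreconnected S) {f : α → ℝ} (hf : ContinuousOn f S) {δ : ℝ} (hδ : 0 < δ)
    (hfδ : ∀ x ∈ S, δ ≤ |f x|) : (∀ x ∈ S, δ ≤ f x) ∨ (∀ x ∈ S, f x ≤ -δ) := by
  by_contra! hcon
  obtain ⟨⟨x, hx, hfx⟩, y, hy, hfy⟩ := hcon
  have hfx' : f x ≤ -δ := (le_abs'.1 (hfδ x hx)).resolve_right hfx.not_ge
  have hfy' : δ ≤ f y := (le_abs'.1 (hfδ y hy)).resolve_left hfy.not_ge
  obtain ⟨z, hz, hfz⟩ := hS.intermediate_value hx hy hf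
    (show (0 : ℝ) ∈ Icc (f x) (f y) from ⟨by linarith, by linarith⟩)
  have := hfδ z hz
  rw [hfz, abs_zero] at this
  linarith

section Sublevel

variable {a b δ η : ℝ} {h : ℝ → ℝ}

theorem volume_sublevel_le_of_le_derivWithin (hh : DifferentiableOn ℝ h (Icc a b))
    (hδ : 0 < δ) (hh' : ∀ x ∈ Icc a b, δ ≤ derivWithin h (Icc a b) x) :
    volume {x ∈ Icc a b | |h x| < η} ≤ ENNReal.ofReal (2 * η / δ) :=
  volume_le_of_mul_sub_le hδ
    (fun _ hx _ hy hxy => mul_sub_le_sub_of_le_derivWithin hh hx.1.1 hy.1.2 hxy fun z hz =>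
      hh' z ⟨hx.1.1.trans hz.1.le, hz.2.le.trans hy.1.2⟩)
    fun _ hx => hx.2

theorem volume_sublevel_le_of_le_abs_derivWithin (hh : DifferentiableOn ℝ h (Icc a b))
    (hh'c : ContinuousOn (derivWithin h (Icc a b)) (Icc a b)) (hδ : 0 < δ)
    (hh' : ∀ x ∈ Icc a b, δ ≤ |derivWithin h (Icc a b) x|) :
    volume {x ∈ Icc a b | |h x| < η} ≤ ENNReal.ofReal (2 * η / δ) := by
  rcases isPreconnected_Icc.forall_le_or_forall_le_neg hh'c hδ hh' with hpos | hneg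
  · exact volume_sublevel_le_of_le_derivWithin hh hδ hpos
  · simpa only [abs_neg] using volume_sublevel_le_of_le_derivWithin (h := fun x => -h x) hh.neg
      hδ fun x hx => by
        rw [derivWithin.fun_neg]
        linarith [hneg x hx]

theorem volume_sublevel_le_of_le_derivWithin_derivWithin (hh : DifferentiableOn ℝ h (Icc a b))
    (hh' : DifferentiableOn ℝ (derivWithin h (Icc a b)) (Icc a b)) (hδ : 0 < δ) (hη : 0 < η)
    (hh'' : ∀ x ∈ Icc a b, δ ≤ derivWithin (derivWithin h (Icc a b)) (Icc a b) x) :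
    volume {x ∈ Icc a b | |h x| < η} ≤ ENNReal.ofReal (6 * √(η / δ)) := by
  set g := derivWithin h (Icc a b)
  set s := √(η / δ)
  set E := {x ∈ Icc a b | |h x| < η}
  have hs : 0 < s := Real.sqrt_pos.2 (div_pos hη hδ)
  have hηs : 2 * η / (δ * s) = 2 * s := by
    have hη' : η = δ * s ^ 2 := by
      rw [Real.sq_sqrt (div_pos hη hδ).le]
      field_simp
    rw [hη']
    field_simp
  have hg : MonotoneOn g (Icc a b) := fun x hx y hy hxy => by
    nlinarith [mul_sub_le_sub_of_le_derivWithin hh' hx.1 hy.2 hxy fun z hz =>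
      hh'' z ⟨hx.1.trans hz.1.le, hz.2.le.trans hy.2⟩]
  have hcover : E ⊆ {x ∈ E | δ * s ≤ g x} ∪ {x ∈ E | g x ≤ -(δ * s)} ∪
      {x ∈ Icc a b | |g x| < δ * s} := by
    intro x hx
    rcases lt_or_ge |g x| (δ * s) with hgx | hgx
    · exact Or.inr ⟨hx.1, hgx⟩
    · rcases le_abs'.1 hgx with hgx | hgx
      · exact Or.inl (Or.inr ⟨hx, hgx⟩)
      · exact Or.inl (Or.inl ⟨hx, hgx⟩)
  have hA : volume {x ∈ E | δ * s ≤ g x} ≤ ENNReal.ofReal (2 * s) := by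
    rw [← hηs]
    refine volume_le_of_mul_sub_le (by positivity) (fun x hx y hy hxy =>
      mul_sub_le_sub_of_le_derivWithin hh hx.1.1.1 hy.1.1.2 hxy fun z hz => ?_) fun x hx => hx.1.2
    exact hx.2.trans (hg hx.1.1 ⟨hx.1.1.1.trans hz.1.le, hz.2.le.trans hy.1.1.2⟩ hz.1.le)
  have hB : volume {x ∈ E | g x ≤ -(δ * s)} ≤ ENNReal.ofReal (2 * s) := by
    rw [← hηs]
    refine volume_le_of_mul_sub_le (f := fun x => -h x) (by positivity) (fun x hx y hy hxy =>
      mul_sub_le_sub_of_le_derivWithin hh.neg hx.1.1.1 hy.1.1.2 hxy fun z hz => ?_)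
      fun x hx => by simpa only [abs_neg] using hx.1.2
    rw [derivWithin.neg]
    linarith [hy.2, hg ⟨hx.1.1.1.trans hz.1.le, hz.2.le.trans hy.1.1.2⟩ hy.1.1 hz.2.le]
  have hM : volume {x ∈ Icc a b | |g x| < δ * s} ≤ ENNReal.ofReal (2 * s) := by
    have := volume_sublevel_le_of_le_derivWithin (η := δ * s) hh' hδ hh''
    rwa [mul_div_assoc, mul_div_cancel_left₀ s hδ.ne'] at this
  calc volume E
      ≤ volume {x ∈ E | δ * s ≤ g x} + volume {x ∈ E | g x ≤ -(δ * s)} +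
          volume {x ∈ Icc a b | |g x| < δ * s} :=
        (measure_mono hcover).trans <| (measure_union_le _ _).trans <|
          add_le_add_left (measure_union_le _ _) _
    _ ≤ ENNReal.ofReal (2 * s) + ENNReal.ofReal (2 * s) + ENNReal.ofReal (2 * s) := by gcongr
    _ = ENNReal.ofReal (6 * s) := by
        rw [← ENNReal.ofReal_add (by positivity) (by positivity),
          ← ENNReal.ofReal_add (by positivity) (by positivity)]
        ring_nf

theorem volume_sublevel_le_of_le_abs_derivWithin_derivWithin
    (hh : DifferentiableOn ℝ h (Icc a b))
    (hh' : DifferentiableOn ℝ (derivWithin h (Icc a b)) (Icc a b))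
    (hh''c : ContinuousOn (derivWithin (derivWithin h (Icc a b)) (Icc a b)) (Icc a b))
    (hδ : 0 < δ) (hη : 0 < η)
    (hh'' : ∀ x ∈ Icc a b, δ ≤ |derivWithin (derivWithin h (Icc a b)) (Icc a b) x|) :
    volume {x ∈ Icc a b | |h x| < η} ≤ ENNReal.ofReal (6 * √(η / δ)) := by
  rcases isPreconnected_Icc.forall_le_or_forall_le_neg hh''c hδ hh'' with hpos | hneg
  · exact volume_sublevel_le_of_le_derivWithin_derivWithin hh hh' hδ hη hpos
  · have hg : derivWithin (fun x => -h x) (Icc a b) = fun x => -derivWithin h (Icc a b) x :=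
      funext fun _ => derivWithin.fun_neg
    simpa only [abs_neg] using volume_sublevel_le_of_le_derivWithin_derivWithin
      (h := fun x => -h x) hh.neg (hg ▸ hh'.neg) hδ hη fun x hx => by
        rw [hg, derivWithin.fun_neg]
        linarith [hneg x hx]

end Sublevel

theorem stmt3 : ∃ K > (0 : ℝ), ∀ (a b : ℝ), a ≤ b → ∀ h : ℝ → ℝ,
    ContDiffOn ℝ 2 h (Icc a b) → ∀ δ₁ δ₂ : ℝ,
    (∀ x ∈ Icc a b, δ₁ ≤ |derivWithin h (Icc a b) x|) →
    (∀ x ∈ Icc a b, δ₂ ≤ |derivWithin (derivWithin h (Icc a b)) (Icc a b) x|) →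
    ∀ η : ℝ, 0 < η →
    (0 < δ₁ → volume {x ∈ Icc a b | |h x| < η} ≤ ENNReal.ofReal (K * η / δ₁)) ∧
    (0 < δ₂ → volume {x ∈ Icc a b | |h x| < η} ≤
      ENNReal.ofReal (K * Real.sqrt (η / δ₂))) := by
  refine ⟨6, by norm_num, fun a b hab h hh δ₁ δ₂ hh' hh'' η hη => ?_⟩
  rcases hab.eq_or_lt with rfl | hab
  · have : volume {x ∈ Icc a a | |h x| < η} = 0 :=
      measure_mono_null (fun _ hx => hx.1) (by simp)
    rw [this]
    exact ⟨fun _ => zero_le, fun _ => zero_le⟩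
  have hI : UniqueDiffOn ℝ (Icc a b) := uniqueDiffOn_Icc hab
  have hg : ContDiffOn ℝ 1 (derivWithin h (Icc a b)) (Icc a b) :=
    hh.derivWithin hI (by norm_num)
  refine ⟨fun hδ₁ => ?_, fun hδ₂ => ?_⟩
  · refine (volume_sublevel_le_of_le_abs_derivWithin (hh.differentiableOn (by norm_num))
      hg.continuousOn hδ₁ hh').trans (ENNReal.ofReal_le_ofReal ?_)
    gcongr
    norm_num
  · exact volume_sublevel_le_of_le_abs_derivWithin_derivWithin
      (hh.differentiableOn (by norm_num)) (hg.differentiableOn one_ne_zero)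
      (hg.continuousOn_derivWithin hI le_rfl) hδ₂ hη hh''
end

section
/- Let I be a compact interval, let f: I → ℝ be a C² function with f''(x) ≠ 0 for all x ∈ I, let M := 1 + max_{x∈I} |f'(x)|, and let ψ: ℕ → (0,∞). If q₁, q₂, p are integers with |q₁| > 2M·|q₂| (so that q := max(|q₁|,|q₂|) = |q₁|), then the Lebesgue measure of μ(q₁,q₂,p) satisfies |μ(q₁,q₂,p)| ≤ 4·ψ(|q₁|)/|q₁|. -/
/-!
On `I = [a, b]` put `g x = q₁ x + q₂ f x - p`. Since `|f'| ≤ M - 1` and `2 M |q₂| < |q₁|`,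
the derivative `q₁ + q₂ f'` of `g` has absolute value at least `|q₁| / 2`, so by the mean value
theorem `g` moves by at least `|q₁| / 2 · (y - x)` between points `x ≤ y` of `I`. Two points of
`μ(q₁, q₂, p)` have `|g y - g x| < 2 ψ(|q₁|)`, hence lie within `4 ψ(|q₁|) / |q₁|` of each other,
and a subset of `ℝ` has measure at most its diameter.
-/

open MeasureTheory Set

lemma Real.volume_le_ofReal_of_sub_le {S : Set ℝ} {C : ℝ}
    (h : ∀ x ∈ S, ∀ y ∈ S, x ≤ y → y - x ≤ C) : volume S ≤ ENNReal.ofReal C := by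
  refine (Real.volume_le_diam S).trans (Metric.ediam_le fun x hx y hy => ?_)
  rw [edist_dist, Real.dist_eq]
  refine ENNReal.ofReal_le_ofReal ?_
  rcases le_total x y with hxy | hyx
  · rw [abs_sub_comm, abs_of_nonneg (sub_nonneg.2 hxy)]
    exact h x hx y hy hxy
  · rw [abs_of_nonneg (sub_nonneg.2 hyx)]
    exact h y hy x hx hyx

lemma mul_sub_le_abs_sub_of_le_abs_deriv {g g' : ℝ → ℝ} {x y K : ℝ} (hxy : x ≤ y)
    (hg : ContinuousOn g (Icc x y)) (hg' : ∀ c ∈ Ioo x y, HasDerivAt g (g' c) c)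
    (hK : ∀ c ∈ Ioo x y, K ≤ |g' c|) : K * (y - x) ≤ |g y - g x| := by
  rcases hxy.eq_or_lt with rfl | hlt
  · simp
  obtain ⟨c, hc, hslope⟩ := exists_hasDerivAt_eq_slope g g' hlt hg hg'
  have hyx : 0 < y - x := sub_pos.2 hlt
  calc K * (y - x) ≤ |g' c| * (y - x) := mul_le_mul_of_nonneg_right (hK c hc) hyx.le
    _ = |g y - g x| := by rw [hslope, abs_div, abs_of_pos hyx, div_mul_cancel₀ _ hyx.ne']

lemma volume_abs_lt_le_of_le_abs_deriv {g g' : ℝ → ℝ} {a b K ε : ℝ} (hK : 0 < K)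
    (hg : ContinuousOn g (Icc a b)) (hg' : ∀ c ∈ Ioo a b, HasDerivAt g (g' c) c)
    (hKg' : ∀ c ∈ Ioo a b, K ≤ |g' c|) :
    volume {x ∈ Icc a b | |g x| < ε} ≤ ENNReal.ofReal (2 * ε / K) := by
  refine Real.volume_le_ofReal_of_sub_le fun x ⟨hxI, hx⟩ y ⟨hyI, hy⟩ hxy => ?_
  have hsub : Icc x y ⊆ Icc a b := Icc_subset_Icc hxI.1 hyI.2
  have hIoo : Ioo x y ⊆ Ioo a b := Ioo_subset_Ioo hxI.1 hyI.2
  have hmove : K * (y - x) ≤ |g y - g x| :=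
    mul_sub_le_abs_sub_of_le_abs_deriv hxy (hg.mono hsub) (fun c hc => hg' c (hIoo hc))
      (fun c hc => hKg' c (hIoo hc))
  have hclose : |g y - g x| < 2 * ε := by linarith [abs_sub (g y) (g x)]
  rw [le_div_iff₀ hK]
  linarith

lemma half_abs_le_abs_add_mul {u v t : ℝ} (h : |v| * |t| ≤ |u| / 2) :
    |u| / 2 ≤ |u + v * t| := by
  have := abs_sub_abs_le_abs_sub u (-(v * t))
  rw [abs_neg, abs_mul, sub_neg_eq_add] at this
  linarith

theorem stmt9_general (a b : ℝ) (f : ℝ → ℝ)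
    (hf : ContDiffOn ℝ 2 f (Icc a b))
    (M : ℝ) (hM : IsGreatest ((fun x => |derivWithin f (Icc a b) x|) '' Icc a b) (M - 1))
    (ψ : ℕ → ℝ)
    (q₁ q₂ p : ℤ) (hq : 2 * M * |(q₂ : ℝ)| < |(q₁ : ℝ)|) :
    volume {x ∈ Icc a b | |(q₁ : ℝ) * x + (q₂ : ℝ) * f x - (p : ℝ)| <
        ψ (max q₁.natAbs q₂.natAbs)}
      ≤ ENNReal.ofReal (4 * ψ q₁.natAbs / |(q₁ : ℝ)|) := by
  set f' := derivWithin f (Icc a b)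
  have hM1 : 0 ≤ M - 1 := by
    obtain ⟨x, -, hx⟩ := hM.1
    rw [← hx]
    positivity
  have hq₂ : |(q₂ : ℝ)| * M < |(q₁ : ℝ)| / 2 := by linarith
  have hq₁ : 0 < |(q₁ : ℝ)| := by nlinarith [abs_nonneg (q₂ : ℝ)]
  have hmax : max q₁.natAbs q₂.natAbs = q₁.natAbs := by
    refine max_eq_left (le_of_lt (Nat.cast_lt (α := ℝ).1 ?_))
    rw [Nat.cast_natAbs, Nat.cast_natAbs, Int.cast_abs, Int.cast_abs]
    nlinarith [abs_nonneg (q₂ : ℝ)]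
  have hf' : ∀ c ∈ Ioo a b, HasDerivAt f (f' c) c := fun c hc =>
    ((hf.differentiableOn (by norm_num) c (Ioo_subset_Icc_self hc)).hasDerivWithinAt).hasDerivAt
      (Icc_mem_nhds hc.1 hc.2)
  have hbound : ∀ c ∈ Ioo a b, |(q₁ : ℝ)| / 2 ≤ |(q₁ : ℝ) + q₂ * f' c| := fun c hc =>
    half_abs_le_abs_add_mul <| by
      have : |f' c| ≤ M - 1 := hM.2 ⟨c, Ioo_subset_Icc_self hc, rfl⟩
      nlinarith [abs_nonneg (q₂ : ℝ)]
  rw [hmax, show 4 * ψ q₁.natAbs / |(q₁ : ℝ)| = 2 * ψ q₁.natAbs / (|(q₁ : ℝ)| / 2) by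
    field_simp; ring]
  have hfc : ContinuousOn f (Icc a b) := hf.continuousOn
  refine volume_abs_lt_le_of_le_abs_deriv (half_pos hq₁) (by fun_prop) (fun c hc => ?_) hbound
  simpa using (((hasDerivAt_id c).const_mul (q₁ : ℝ)).add ((hf' c hc).const_mul (q₂ : ℝ))).sub_const
    (p : ℝ)

theorem stmt9 (a b : ℝ) (hab : a ≤ b) (f : ℝ → ℝ)
    (hf : ContDiffOn ℝ 2 f (Icc a b))
    (hne : ∀ x ∈ Icc a b, derivWithin (derivWithin f (Icc a b)) (Icc a b) x ≠ 0)
    (M : ℝ) (hM : IsGreatest ((fun x => |derivWithin f (Icc a b) x|) '' Icc a b) (M - 1))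
    (ψ : ℕ → ℝ) (hψpos : ∀ q, 0 < ψ q)
    (q₁ q₂ p : ℤ) (hq : 2 * M * |(q₂ : ℝ)| < |(q₁ : ℝ)|) :
    volume {x ∈ Icc a b | |(q₁ : ℝ) * x + (q₂ : ℝ) * f x - (p : ℝ)| <
        ψ (max q₁.natAbs q₂.natAbs)}
      ≤ ENNReal.ofReal (4 * ψ q₁.natAbs / |(q₁ : ℝ)|) :=
  stmt9_general a b f hf M hM ψ q₁ q₂ p hq
end

section
/- Let f: ℝ → ℝ be a C² function with 0 < c₁ ≤ |f''(x)| ≤ c₂ < ∞ for all x ∈ ℝ and with f'' of constant sign, let I ⊆ ℝ be a compact interval, let M := 1 + max_{x∈I} |f'(x)|, and let ψ: ℕ → (0,∞) be monotonically decreasing. There is a constant K > 0 depending only on c₁ and c₂ with the following property: for integers q₁, q₂ with q₂ ≠ 0 and |q₁| ≤ 2M|q₂|, set q := max(|q₁|,|q₂|), F(x) := q₁x + q₂f(x), let x₀ be the unique point with F'(x₀) = 0, and let p₀ be the unique integer with −1/2 < F(x₀) − p₀ ≤ 1/2. If ψ(q) ≤ 1/8 and p ∈ ℤ with p ≠ p₀,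 then the Lebesgue measure of μ(q₁,q₂,p) satisfies |μ(q₁,q₂,p)| ≤ K·ψ(q)·(|q₂|·|p − p₀|)^{−1/2}. -/
open MeasureTheory Set

/-! Write `F x = q₁ x + q₂ f x`. Then `F' x₀ = 0` and `c₁ |q₂| ≤ |F''| ≤ c₂ |q₂|`, so
`|F x - F x₀| ≤ c₂ |q₂| (x - x₀)²`. As `F x₀` is within `1/2` of `p₀` and `ψ ≤ 1/8`, a point where
`F` is within `ψ` of `p ≠ p₀` has `|F x - F x₀| ≥ 3 |p - p₀| / 8`, hence lies at distance at least
`r = √(3 |p - p₀| / (8 c₂ |q₂|))` from `x₀`. There `|F'| ≥ c₁ |q₂| r`, so by the mean value theorem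
the set has diameter at most `2 ψ / (c₁ |q₂| r)` on each side of `x₀`. -/

section MeanValue

variable {g g' g'' : ℝ → ℝ} {s : Set ℝ} {m : ℝ}

theorem mul_abs_sub_le_abs_sub_of_le_abs_deriv (hs : s.OrdConnected)
    (hg : ∀ x ∈ s, HasDerivAt g (g' x) x) (hm : ∀ x ∈ s, m ≤ |g' x|) {x y : ℝ}
    (hx : x ∈ s) (hy : y ∈ s) : m * |y - x| ≤ |g y - g x| := by
  wlog hxy : x ≤ y generalizing x y
  · rw [abs_sub_comm, abs_sub_comm (g y)]
    exact this hy hx (le_of_not_ge hxy)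
  rcases hxy.eq_or_lt with rfl | hxy
  · simp
  have hIcc : Icc x y ⊆ s := hs.out hx hy
  obtain ⟨ξ, hξ, hslope⟩ := exists_hasDerivAt_eq_slope g g' hxy
    (fun z hz => (hg z (hIcc hz)).continuousAt.continuousWithinAt)
    (fun z hz => hg z (hIcc (Ioo_subset_Icc_self hz)))
  have hyx : 0 < y - x := sub_pos.2 hxy
  rw [eq_div_iff hyx.ne'] at hslope
  rw [← hslope, abs_mul, abs_of_pos hyx]
  exact mul_le_mul_of_nonneg_right (hm ξ (hIcc (Ioo_subset_Icc_self hξ))) hyx.le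

theorem volume_abs_sub_lt_le_of_le_abs_deriv (hs : s.OrdConnected)
    (hg : ∀ x ∈ s, HasDerivAt g (g' x) x) (hm₀ : 0 < m) (hm : ∀ x ∈ s, m ≤ |g' x|)
    (c ε : ℝ) : volume {x ∈ s | |g x - c| < ε} ≤ ENNReal.ofReal (2 * ε / m) := by
  refine (Real.volume_le_diam _).trans (Metric.ediam_le fun x hx y hy => ?_)
  rw [edist_dist, Real.dist_eq, abs_sub_comm]
  refine ENNReal.ofReal_le_ofReal ((le_div_iff₀' hm₀).2 ?_)
  calc m * |y - x| ≤ |g y - g x| := mul_abs_sub_le_abs_sub_of_le_abs_deriv hs hg hm hx.1 hy.1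
    _ ≤ |g y - c| + |g x - c| := by rw [abs_sub_comm (g x)]; exact abs_sub_le _ _ _
    _ ≤ 2 * ε := by linarith [hx.2, hy.2]

theorem abs_sub_le_mul_sq_of_deriv_eq_zero (hg : ∀ x, HasDerivAt g (g' x) x)
    (hg' : ∀ x, HasDerivAt g' (g'' x) x) {C : ℝ} (hC : ∀ x, |g'' x| ≤ C) {x₀ : ℝ}
    (h₀ : g' x₀ = 0) (x : ℝ) : |g x - g x₀| ≤ C * (x - x₀) ^ 2 := by
  have hC₀ : 0 ≤ C := (abs_nonneg _).trans (hC x)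
  have hlin (z : ℝ) : |g' z| ≤ C * |z - x₀| := by
    simpa [h₀] using convex_univ.norm_image_sub_le_of_norm_hasDerivWithin_le
      (fun z _ => (hg' z).hasDerivWithinAt) (fun z _ => hC z) (mem_univ x₀) (mem_univ z)
  have hseg : ∀ z ∈ uIcc x₀ x, ‖g' z‖ ≤ C * |x - x₀| := fun z hz =>
    (hlin z).trans (mul_le_mul_of_nonneg_left (abs_sub_left_of_mem_uIcc hz) hC₀)
  have := (convex_uIcc x₀ x).norm_image_sub_le_of_norm_hasDerivWithin_le
    (fun z _ => (hg z).hasDerivWithinAt) hseg left_mem_uIcc right_mem_uIcc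
  rwa [Real.norm_eq_abs, Real.norm_eq_abs, mul_assoc, ← sq, sq_abs] at this

theorem volume_abs_sub_lt_le_of_deriv_eq_zero (hg : ∀ x, HasDerivAt g (g' x) x)
    (hg' : ∀ x, HasDerivAt g' (g'' x) x) {C : ℝ} (hm₀ : 0 < m) (hC₀ : 0 < C)
    (hm : ∀ x, m ≤ |g'' x|) (hC : ∀ x, |g'' x| ≤ C) {x₀ : ℝ} (h₀ : g' x₀ = 0) {c ε δ : ℝ}
    (hδ : 0 < δ) (hfar : δ + ε ≤ |c - g x₀|) :
    volume {x | |g x - c| < ε} ≤ ENNReal.ofReal (4 * ε / (m * √(δ / C))) := by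
  set r := √(δ / C)
  have hr : 0 < r := Real.sqrt_pos.2 (div_pos hδ hC₀)
  have hr_le (x : ℝ) (hx : |g x - c| < ε) : r ≤ |x - x₀| := by
    have hδx : δ ≤ C * (x - x₀) ^ 2 := calc
      δ ≤ |g x - g x₀| := by linarith [abs_sub_le c (g x) (g x₀), abs_sub_comm c (g x)]
      _ ≤ C * (x - x₀) ^ 2 := abs_sub_le_mul_sq_of_deriv_eq_zero hg hg' hC h₀ x
    exact (Real.sqrt_le_sqrt ((div_le_iff₀' hC₀).2 hδx)).trans_eq (Real.sqrt_sq_eq_abs _)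
  have hderiv (x : ℝ) (hx : r ≤ |x - x₀|) : m * r ≤ |g' x| := by
    have := mul_abs_sub_le_abs_sub_of_le_abs_deriv ordConnected_univ (fun z _ => hg' z)
      (fun z _ => hm z) (mem_univ x₀) (mem_univ x)
    rw [h₀, sub_zero] at this
    exact (mul_le_mul_of_nonneg_left hx hm₀.le).trans this
  have hside (t : Set ℝ) (ht : t.OrdConnected) (htr : ∀ x ∈ t, r ≤ |x - x₀|) :
      volume {x ∈ t | |g x - c| < ε} ≤ ENNReal.ofReal (2 * ε / (m * r)) :=
    volume_abs_sub_lt_le_of_le_abs_deriv ht (fun x _ => hg x) (by positivity)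
      (fun x hx => hderiv x (htr x hx)) c ε
  have hsplit : {x | |g x - c| < ε} ⊆
      {x ∈ Ici (x₀ + r) | |g x - c| < ε} ∪ {x ∈ Iic (x₀ - r) | |g x - c| < ε} := by
    intro x hx
    rcases le_abs'.1 (hr_le x hx) with h | h
    · exact Or.inr ⟨show x ≤ x₀ - r by linarith, hx⟩
    · exact Or.inl ⟨show x₀ + r ≤ x by linarith, hx⟩
  calc volume {x | |g x - c| < ε}
      ≤ volume {x ∈ Ici (x₀ + r) | |g x - c| < ε} + volume {x ∈ Iic (x₀ - r) | |g x - c| < ε} :=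
        (measure_mono hsplit).trans (measure_union_le _ _)
    _ ≤ ENNReal.ofReal (2 * ε / (m * r)) + ENNReal.ofReal (2 * ε / (m * r)) := by
        gcongr
        · exact hside _ ordConnected_Ici fun x (hx : x₀ + r ≤ x) => le_abs.2 (Or.inl (by linarith))
        · exact hside _ ordConnected_Iic fun x (hx : x ≤ x₀ - r) => le_abs.2 (Or.inr (by linarith))
    _ = ENNReal.ofReal (4 * ε / (m * r)) := by
        rw [← two_mul, ← ENNReal.ofReal_ofNat 2, ← ENNReal.ofReal_mul zero_le_two]
        ring_nf

end MeanValue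

theorem stmt14 (c₁ c₂ : ℝ) (hc₁ : 0 < c₁) (hc : c₁ ≤ c₂) :
    ∃ K > (0 : ℝ), ∀ f : ℝ → ℝ, ContDiff ℝ 2 f →
      (∀ x, c₁ ≤ |deriv (deriv f) x| ∧ |deriv (deriv f) x| ≤ c₂) →
      ((∀ x, 0 < deriv (deriv f) x) ∨ (∀ x, deriv (deriv f) x < 0)) →
      ∀ a b : ℝ, a ≤ b →
      ∀ M : ℝ, IsGreatest ((fun x => |deriv f x|) '' Icc a b) (M - 1) →
      ∀ ψ : ℕ → ℝ, (∀ q, 0 < ψ q) → Antitone ψ →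
      ∀ q₁ q₂ : ℤ, q₂ ≠ 0 → |(q₁ : ℝ)| ≤ 2 * M * |(q₂ : ℝ)| →
      ∀ x₀ : ℝ, (q₁ : ℝ) + (q₂ : ℝ) * deriv f x₀ = 0 →
      ∀ p₀ : ℤ, -(1/2) < ((q₁ : ℝ) * x₀ + (q₂ : ℝ) * f x₀) - (p₀ : ℝ) →
        ((q₁ : ℝ) * x₀ + (q₂ : ℝ) * f x₀) - (p₀ : ℝ) ≤ 1/2 →
      ψ (max q₁.natAbs q₂.natAbs) ≤ 1/8 →
      ∀ p : ℤ, p ≠ p₀ →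
      volume {x ∈ Icc a b | |(q₁ : ℝ) * x + (q₂ : ℝ) * f x - (p : ℝ)| <
          ψ (max q₁.natAbs q₂.natAbs)}
        ≤ ENNReal.ofReal (K * ψ (max q₁.natAbs q₂.natAbs) /
            Real.sqrt (|(q₂ : ℝ)| * |(p : ℝ) - (p₀ : ℝ)|)) := by
  have hc₂ : 0 < c₂ := hc₁.trans_le hc
  refine ⟨4 * √(8 * c₂ / 3) / c₁, by positivity, ?_⟩
  intro f hf hf'' _ a b _ M _ ψ _ _ q₁ q₂ hq₂ _ x₀ hx₀ p₀ hp₀ hp₀' hψ p hp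
  set ε := ψ (max q₁.natAbs q₂.natAbs)
  have hD : (1 : ℝ) ≤ |(p : ℝ) - p₀| := by exact_mod_cast Int.one_le_abs (sub_ne_zero.2 hp)
  set D := |(p : ℝ) - p₀|
  have hq : 0 < |(q₂ : ℝ)| := abs_pos.2 (Int.cast_ne_zero.2 hq₂)
  have hF (x : ℝ) : HasDerivAt (fun x => (q₁ : ℝ) * x + q₂ * f x) (q₁ + q₂ * deriv f x) x := by
    simpa using ((hasDerivAt_id' x).const_mul (q₁ : ℝ)).fun_add
      (((hf.differentiable two_ne_zero) x).hasDerivAt.const_mul (q₂ : ℝ))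
  have hF' (x : ℝ) : HasDerivAt (fun x => (q₁ : ℝ) + q₂ * deriv f x)
      (q₂ * deriv (deriv f) x) x :=
    ((hf.differentiable_deriv_two x).hasDerivAt.const_mul _).const_add _
  have hfar : 3 * D / 8 + ε ≤ |p - (q₁ * x₀ + q₂ * f x₀)| := by
    have := abs_le.2 ⟨hp₀.le, hp₀'⟩
    linarith [abs_sub_le (p : ℝ) (q₁ * x₀ + q₂ * f x₀) p₀]
  have key := volume_abs_sub_lt_le_of_deriv_eq_zero hF hF' (m := c₁ * |(q₂ : ℝ)|)
    (C := c₂ * |(q₂ : ℝ)|) (by positivity) (by positivity)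
    (fun x => by rw [abs_mul, mul_comm]; gcongr; exact (hf'' x).1)
    (fun x => by rw [abs_mul, mul_comm]; gcongr; exact (hf'' x).2) hx₀ (by positivity) hfar
  refine (measure_mono fun x hx => hx.2).trans (key.trans_eq (congrArg ENNReal.ofReal ?_))
  have hsqrt : √(|(q₂ : ℝ)| * D) =
      |(q₂ : ℝ)| * √(3 * D / 8 / (c₂ * |(q₂ : ℝ)|)) * √(8 * c₂ / 3) := by
    rw [Real.sqrt_eq_iff_eq_sq (by positivity) (by positivity), mul_pow, mul_pow,
      Real.sq_sqrt (by positivity), Real.sq_sqrt (by positivity)]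
    field_simp
  rw [hsqrt]
  field_simp
end

section
/- Let f: ℝ → ℝ be a C² function with 0 < c₁ ≤ |f''(x)| ≤ c₂ < ∞ for all x ∈ ℝ and with f'' of constant sign, let I ⊆ ℝ be a compact interval, and let ψ: ℕ → (0,∞). There is a constant K > 0 depending only on c₁ and c₂ with the following property: for integers q₁, q₂ with q₂ ≠ 0, set q := max(|q₁|,|q₂|), F(x) := q₁x + q₂f(x), let x₀ be the unique point with F'(x₀) = 0, and let p₀ be the unique integer with −1/2 < F(x₀) − p₀ ≤ 1/2. If ‖F(x₀)‖ ≥ 2ψ(q), then the Lebesgue measure of μ(q₁,q₂,p₀) satisfies |μ(q₁,q₂,p₀)| ≤ K·ψ(q)·(|q₂|·‖F(x₀)‖)^{−1/2}. -/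
open MeasureTheory Set

/-- Distance from a real number to the nearest integer. -/
noncomputable def distNearestInt (y : ℝ) : ℝ := |y - round y|

/-! Write `F x = q₁ x + q₂ f x`, so that `c ≤ |F''| ≤ C` with `c = c₁ |q₂|`, `C = c₂ |q₂|`, and
`F' x₀ = 0`. By the mean value theorem `|F' x| ≥ c |x - x₀|` and `|F x - F x₀| ≤ C |x - x₀|²`.
Since `|F x₀ - p₀| ≥ δ := ‖F x₀‖ ≥ 2ψ`, every `x` with `|F x - p₀| < ψ` satisfies
`|x - x₀| ≥ r := √(δ / 2C)`. On each of the half-lines `x ≤ x₀ - r` and `x ≥ x₀ + r` we have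
`|F'| ≥ c r`, so there the set where `F` stays within `ψ` of `p₀` has diameter at most
`2ψ / (c r)`; adding the two half-lines gives
`|μ(q₁, q₂, p₀)| ≤ 4ψ / (c r) = 4 √(2 c₂) / c₁ · ψ / √(|q₂| δ)`. -/

section MeanValue

variable {f f' : ℝ → ℝ}

theorem abs_sub_le_of_abs_deriv_le (hf : ∀ x, HasDerivAt f (f' x) x) {C x y : ℝ}
    (hC : ∀ ξ ∈ uIcc x y, |f' ξ| ≤ C) : |f y - f x| ≤ C * |y - x| :=
  (convex_uIcc x y).norm_image_sub_le_of_norm_hasDerivWithin_le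
    (fun ξ _ => (hf ξ).hasDerivWithinAt) hC left_mem_uIcc right_mem_uIcc

theorem mul_abs_sub_le_abs_sub_of_le_abs_deriv_s15 (hf : ∀ x, HasDerivAt f (f' x) x) {c x y : ℝ}
    (hc : ∀ ξ ∈ uIcc x y, c ≤ |f' ξ|) : c * |y - x| ≤ |f y - f x| := by
  wlog hxy : x < y generalizing x y
  · rcases (not_lt.mp hxy).eq_or_lt with rfl | hyx
    · simp
    · rw [abs_sub_comm y, abs_sub_comm (f y)]
      exact this (fun ξ hξ => hc ξ (uIcc_comm x y ▸ hξ)) hyx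
  obtain ⟨ξ, hξ, hslope⟩ := exists_hasDerivAt_eq_slope f f' hxy
    (fun t _ => (hf t).continuousAt.continuousWithinAt) (fun t _ => hf t)
  have hmvt : f y - f x = f' ξ * (y - x) := by
    rw [hslope, div_mul_cancel₀ _ (sub_ne_zero.mpr hxy.ne')]
  rw [hmvt, abs_mul]
  exact mul_le_mul_of_nonneg_right (hc ξ (Icc_subset_uIcc (Ioo_subset_Icc_self hξ)))
    (abs_nonneg _)

theorem volume_setOf_abs_sub_lt_le_of_le_abs_deriv (hf : ∀ x, HasDerivAt f (f' x) x)
    {s : Set ℝ} (hs : s.OrdConnected) {c p ψ : ℝ} (hc : 0 < c)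
    (hf' : ∀ x ∈ s, c ≤ |f' x|) :
    volume {x ∈ s | |f x - p| < ψ} ≤ ENNReal.ofReal (2 * ψ / c) := by
  refine (Real.volume_le_diam _).trans (Metric.ediam_le fun x hx y hy => ?_)
  rw [edist_dist, Real.dist_eq]
  refine ENNReal.ofReal_le_ofReal ?_
  rw [le_div_iff₀ hc, mul_comm, abs_sub_comm]
  calc c * |y - x| ≤ |f y - f x| :=
        mul_abs_sub_le_abs_sub_of_le_abs_deriv_s15 hf fun ξ hξ =>
          hf' ξ (hs.uIcc_subset hx.1 hy.1 hξ)
    _ = |(f y - p) - (f x - p)| := by ring_nf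
    _ ≤ |f y - p| + |f x - p| := abs_sub _ _
    _ ≤ 2 * ψ := by linarith [hx.2, hy.2]

end MeanValue

section CriticalPoint

variable {F F' F'' : ℝ → ℝ} {c C x₀ : ℝ}

theorem mul_abs_sub_le_abs_deriv (hF' : ∀ x, HasDerivAt F' (F'' x) x) (hx₀ : F' x₀ = 0)
    (hlow : ∀ x, c ≤ |F'' x|) (t : ℝ) : c * |t - x₀| ≤ |F' t| := by
  simpa [hx₀] using mul_abs_sub_le_abs_sub_of_le_abs_deriv_s15 hF' (x := x₀) (y := t)
    fun ξ _ => hlow ξ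

theorem abs_deriv_le_mul_abs_sub (hF' : ∀ x, HasDerivAt F' (F'' x) x) (hx₀ : F' x₀ = 0)
    (hup : ∀ x, |F'' x| ≤ C) (t : ℝ) : |F' t| ≤ C * |t - x₀| := by
  simpa [hx₀] using abs_sub_le_of_abs_deriv_le hF' (x := x₀) (y := t) fun ξ _ => hup ξ

theorem abs_sub_le_mul_sq_of_deriv_eq_zero_s15 (hF : ∀ x, HasDerivAt F (F' x) x)
    (hF' : ∀ x, HasDerivAt F' (F'' x) x) (hx₀ : F' x₀ = 0) (hup : ∀ x, |F'' x| ≤ C)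
    (x : ℝ) :
    |F x - F x₀| ≤ C * |x - x₀| ^ 2 := by
  have hC : 0 ≤ C := (abs_nonneg _).trans (hup x₀)
  calc |F x - F x₀| ≤ (C * |x - x₀|) * |x - x₀| :=
        abs_sub_le_of_abs_deriv_le hF fun ξ hξ =>
          (abs_deriv_le_mul_abs_sub hF' hx₀ hup ξ).trans
            (mul_le_mul_of_nonneg_left (abs_sub_left_of_mem_uIcc hξ) hC)
    _ = C * |x - x₀| ^ 2 := by ring

theorem sqrt_le_abs_sub_of_abs_sub_lt (hF : ∀ x, HasDerivAt F (F' x) x)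
    (hF' : ∀ x, HasDerivAt F' (F'' x) x) (hx₀ : F' x₀ = 0) (hC : 0 < C)
    (hup : ∀ x, |F'' x| ≤ C) {p δ ψ x : ℝ} (hδ : δ ≤ |F x₀ - p|)
    (hψδ : 2 * ψ ≤ δ)
    (hx : |F x - p| < ψ) : √(δ / (2 * C)) ≤ |x - x₀| := by
  rw [Real.sqrt_le_left (abs_nonneg _), div_le_iff₀ (by positivity)]
  have hmove : |F x₀ - p| - |F x - p| ≤ |F x - F x₀| := by
    simpa [abs_sub_comm] using abs_sub_abs_le_abs_sub (F x₀ - p) (F x - p)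
  nlinarith [abs_sub_le_mul_sq_of_deriv_eq_zero_s15 hF hF' hx₀ hup x]

theorem volume_setOf_abs_sub_lt_le_of_deriv_eq_zero (hF : ∀ x, HasDerivAt F (F' x) x)
    (hF' : ∀ x, HasDerivAt F' (F'' x) x) (hx₀ : F' x₀ = 0) (hc : 0 < c)
    (hlow : ∀ x, c ≤ |F'' x|) (hup : ∀ x, |F'' x| ≤ C) {p δ ψ : ℝ} (hψ : 0 < ψ)
    (hδ : δ ≤ |F x₀ - p|) (hψδ : 2 * ψ ≤ δ) :
    volume {x | |F x - p| < ψ} ≤ ENNReal.ofReal (4 * ψ / (c * √(δ / (2 * C)))) := by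
  set r := √(δ / (2 * C))
  have hC : 0 < C := hc.trans_le ((hlow 0).trans (hup 0))
  have hδ₀ : 0 < δ := by linarith
  have hr : 0 < r := Real.sqrt_pos.mpr (by positivity)
  have hbranch : ∀ s : Set ℝ, s.OrdConnected → (∀ x ∈ s, r ≤ |x - x₀|) →
      volume {x ∈ s | |F x - p| < ψ} ≤ ENNReal.ofReal (2 * ψ / (c * r)) :=
    fun s hs hsr => volume_setOf_abs_sub_lt_le_of_le_abs_deriv hF hs (by positivity)
      fun x hx => (mul_le_mul_of_nonneg_left (hsr x hx) hc.le).trans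
        (mul_abs_sub_le_abs_deriv hF' hx₀ hlow x)
  have hcover : {x | |F x - p| < ψ} ⊆
      {x ∈ Iic (x₀ - r) | |F x - p| < ψ} ∪ {x ∈ Ici (x₀ + r) | |F x - p| < ψ} := by
    intro x hx
    rcases le_abs'.mp (sqrt_le_abs_sub_of_abs_sub_lt hF hF' hx₀ hC hup hδ hψδ hx) with h | h
    · exact Or.inl ⟨mem_Iic.mpr (by linarith), hx⟩
    · exact Or.inr ⟨mem_Ici.mpr (by linarith), hx⟩
  calc volume {x | |F x - p| < ψ}
      ≤ volume {x ∈ Iic (x₀ - r) | |F x - p| < ψ} +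
          volume {x ∈ Ici (x₀ + r) | |F x - p| < ψ} :=
        (measure_mono hcover).trans (measure_union_le _ _)
    _ ≤ ENNReal.ofReal (2 * ψ / (c * r)) + ENNReal.ofReal (2 * ψ / (c * r)) := by
        gcongr
        · exact hbranch _ ordConnected_Iic fun x hx =>
            le_abs'.mpr (Or.inl (by linarith [mem_Iic.mp hx]))
        · exact hbranch _ ordConnected_Ici fun x hx =>
            le_abs'.mpr (Or.inr (by linarith [mem_Ici.mp hx]))
    _ = ENNReal.ofReal (4 * ψ / (c * r)) := by
        rw [← ENNReal.ofReal_add (by positivity) (by positivity)]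
        ring_nf

end CriticalPoint

theorem stmt15 (c₁ c₂ : ℝ) (hc₁ : 0 < c₁) (hc : c₁ ≤ c₂) :
    ∃ K > (0 : ℝ), ∀ f : ℝ → ℝ, ContDiff ℝ 2 f →
      (∀ x, c₁ ≤ |deriv (deriv f) x| ∧ |deriv (deriv f) x| ≤ c₂) →
      ((∀ x, 0 < deriv (deriv f) x) ∨ (∀ x, deriv (deriv f) x < 0)) →
      ∀ a b : ℝ, a ≤ b →
      ∀ ψ : ℕ → ℝ, (∀ q, 0 < ψ q) →
      ∀ q₁ q₂ : ℤ, q₂ ≠ 0 →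
      ∀ x₀ : ℝ, (q₁ : ℝ) + (q₂ : ℝ) * deriv f x₀ = 0 →
      ∀ p₀ : ℤ, -(1/2) < ((q₁ : ℝ) * x₀ + (q₂ : ℝ) * f x₀) - (p₀ : ℝ) →
        ((q₁ : ℝ) * x₀ + (q₂ : ℝ) * f x₀) - (p₀ : ℝ) ≤ 1/2 →
      2 * ψ (max q₁.natAbs q₂.natAbs) ≤
          distNearestInt ((q₁ : ℝ) * x₀ + (q₂ : ℝ) * f x₀) →
      volume {x ∈ Icc a b | |(q₁ : ℝ) * x + (q₂ : ℝ) * f x - (p₀ : ℝ)| <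
          ψ (max q₁.natAbs q₂.natAbs)}
        ≤ ENNReal.ofReal (K * ψ (max q₁.natAbs q₂.natAbs) /
            Real.sqrt (|(q₂ : ℝ)| *
              distNearestInt ((q₁ : ℝ) * x₀ + (q₂ : ℝ) * f x₀))) := by
  have hc₂ : 0 < c₂ := hc₁.trans_le hc
  refine ⟨4 * √(2 * c₂) / c₁, by positivity, ?_⟩
  intro f hf hbound _ a b _ ψ hψ q₁ q₂ hq₂ x₀ hx₀ p₀ _ _ hψδ
  have hf₁ : ∀ x, HasDerivAt f (deriv f x) x :=
    fun x => (hf.differentiable (by norm_num) x).hasDerivAt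
  have hf₂ : ∀ x, HasDerivAt (deriv f) (deriv (deriv f) x) x := by
    have hf' := (contDiff_succ_iff_deriv.mp (show ContDiff ℝ (1 + 1) f by exact_mod_cast hf)).2.2
    exact fun x => (hf'.differentiable (by norm_num) x).hasDerivAt
  have hq : 0 < |(q₂ : ℝ)| := abs_pos.mpr (Int.cast_ne_zero.mpr hq₂)
  set δ := distNearestInt ((q₁ : ℝ) * x₀ + (q₂ : ℝ) * f x₀)
  have hδ : 0 < δ := (mul_pos two_pos (hψ _)).trans_le hψδ
  have hvol := volume_setOf_abs_sub_lt_le_of_deriv_eq_zero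
    (F := fun x => (q₁ : ℝ) * x + q₂ * f x) (c := |(q₂ : ℝ)| * c₁) (C := |(q₂ : ℝ)| * c₂)
    (δ := δ)
    (fun x => ((hasDerivAt_id x).const_mul _).add ((hf₁ x).const_mul _) |>.congr_deriv (by simp))
    (fun x => ((hf₂ x).const_mul (q₂ : ℝ)).const_add (q₁ : ℝ)) hx₀ (by positivity)
    (fun x => by rw [abs_mul]; exact mul_le_mul_of_nonneg_left (hbound x).1 hq.le)
    (fun x => by rw [abs_mul]; exact mul_le_mul_of_nonneg_left (hbound x).2 hq.le)
    (hψ _) (round_le _ p₀) hψδ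
  refine (measure_mono fun x hx => hx.2).trans (hvol.trans_eq (congrArg ENNReal.ofReal ?_))
  rw [Real.sqrt_mul hq.le, Real.sqrt_div hδ.le, mul_left_comm, Real.sqrt_mul (by positivity)]
  field_simp
  rw [Real.sq_sqrt hq.le]
end

section
/- Let f: ℝ → ℝ be a C² function with 0 < c₁ ≤ |f''(x)| ≤ c₂ < ∞ for all x ∈ ℝ and with f'' of constant sign, let I ⊆ ℝ be a compact interval, and let ψ: ℕ → (0,∞). There is a constant K > 0 depending only on c₁ and c₂ with the following property: for integers q₁, q₂ with q₂ ≠ 0, set q := max(|q₁|,|q₂|), F(x) := q₁x + q₂f(x), let x₀ be the unique point with F'(x₀) = 0, and let p₀ be the unique integer with −1/2 < F(x₀) − p₀ ≤ 1/2. If ‖F(x₀)‖ < 2ψ(q), then the Lebesgue measure of μ(q₁,q₂,p₀) satisfies |μ(q₁,q₂,p₀)| ≤ K·√(ψ(q)/|q₂|). -/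
open MeasureTheory Set

/-!
Write `F x = q₁ x + q₂ f x`. Its second derivative has size at least `c₁ |q₂|`, so by Taylor's
theorem at the critical point `x₀` it grows quadratically: `|F x - F x₀| ≥ c₁ |q₂| (x - x₀)² / 2`.
Since `p₀` is a nearest integer to `F x₀`, the hypothesis gives `|F x₀ - p₀| < 2ψ`, so
`|F x - p₀| < ψ` forces `|F x - F x₀| < 3ψ`, which confines `x` to an interval around `x₀` of length
`2 √(6ψ / (c₁ |q₂|))`.
-/

theorem le_abs_sub_of_deriv_eq_zero {F : ℝ → ℝ} (hF : ContDiff ℝ 2 F) {c x₀ : ℝ}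
    (hd : deriv F x₀ = 0) (hc : ∀ t, c ≤ |deriv (deriv F) t|) (x : ℝ) :
    c / 2 * (x - x₀) ^ 2 ≤ |F x - F x₀| := by
  rcases eq_or_ne x₀ x with rfl | hx
  · simp
  obtain ⟨x', -, hT⟩ :=
    taylor_mean_remainder_lagrange_iteratedDeriv (n := 1) hx hF.contDiffOn
  have hlin : taylorWithinEval F 1 (uIcc x₀ x) x₀ x = F x₀ := by
    have hF' : derivWithin F (uIcc x₀ x) x₀ = deriv F x₀ :=
      (hF.differentiable two_ne_zero x₀).derivWithin (uniqueDiffOn_uIcc hx x₀ left_mem_uIcc)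
    simp [taylor_within_apply, hF', hd]
  rw [hlin, iteratedDeriv_succ, iteratedDeriv_one] at hT
  have h2 : ((Nat.factorial (1 + 1) : ℕ) : ℝ) = 2 := by norm_num [Nat.factorial]
  rw [hT, abs_div, abs_mul, abs_pow, h2, abs_two, sq_abs]
  have := hc x'
  nlinarith [sq_nonneg (x - x₀)]

theorem volume_setOf_abs_sub_lt_le_of_quadratic_growth {F : ℝ → ℝ} {x₀ κ : ℝ} (hκ : 0 < κ)
    (hF : ∀ x, κ * (x - x₀) ^ 2 ≤ |F x - F x₀|) (η : ℝ) :
    volume {x | |F x - F x₀| < η} ≤ ENNReal.ofReal (2 * √(η / κ)) := by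
  have hsub : {x | |F x - F x₀| < η} ⊆ Metric.ball x₀ √(η / κ) := by
    intro x hx
    rw [Metric.mem_ball, Real.dist_eq, ← Real.sqrt_sq_eq_abs]
    refine Real.sqrt_lt_sqrt (sq_nonneg _) ((lt_div_iff₀ hκ).2 ?_)
    linarith [hF x, show |F x - F x₀| < η from hx]
  exact (measure_mono hsub).trans_eq (Real.volume_ball _ _)

theorem distNearestInt_eq_abs_sub {y : ℝ} {p : ℤ} (hp : |y - p| ≤ 1 / 2) :
    distNearestInt y = |y - p| := by
  refine le_antisymm (round_le y p) ?_
  by_cases h : p = round y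
  · rw [h]; rfl
  have h1 : (1 : ℝ) ≤ |(p : ℝ) - round y| := by
    exact_mod_cast Int.one_le_abs (sub_ne_zero.mpr h)
  have htri := abs_sub_le (p : ℝ) y (round y)
  rw [abs_sub_comm (p : ℝ) y] at htri
  have := abs_sub_round y
  unfold distNearestInt
  linarith

theorem deriv_linear_add_const_mul {f : ℝ → ℝ} (hf : Differentiable ℝ f) (a b : ℝ) :
    deriv (fun x => a * x + b * f x) = fun x => a + b * deriv f x := by
  funext x
  have h := ((hasDerivAt_id' x).const_mul a).add ((hf x).hasDerivAt.const_mul b)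
  rw [mul_one] at h
  exact h.deriv

theorem stmt16_general (c₁ c₂ : ℝ) (hc₁ : 0 < c₁) :
    ∃ K > (0 : ℝ), ∀ f : ℝ → ℝ, ContDiff ℝ 2 f →
      (∀ x, c₁ ≤ |deriv (deriv f) x| ∧ |deriv (deriv f) x| ≤ c₂) →
      ((∀ x, 0 < deriv (deriv f) x) ∨ (∀ x, deriv (deriv f) x < 0)) →
      ∀ a b : ℝ, a ≤ b →
      ∀ ψ : ℕ → ℝ, (∀ q, 0 < ψ q) →
      ∀ q₁ q₂ : ℤ, q₂ ≠ 0 →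
      ∀ x₀ : ℝ, (q₁ : ℝ) + (q₂ : ℝ) * deriv f x₀ = 0 →
      ∀ p₀ : ℤ, -(1/2) < ((q₁ : ℝ) * x₀ + (q₂ : ℝ) * f x₀) - (p₀ : ℝ) →
        ((q₁ : ℝ) * x₀ + (q₂ : ℝ) * f x₀) - (p₀ : ℝ) ≤ 1/2 →
      distNearestInt ((q₁ : ℝ) * x₀ + (q₂ : ℝ) * f x₀) <
          2 * ψ (max q₁.natAbs q₂.natAbs) →
      volume {x ∈ Icc a b | |(q₁ : ℝ) * x + (q₂ : ℝ) * f x - (p₀ : ℝ)| <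
          ψ (max q₁.natAbs q₂.natAbs)}
        ≤ ENNReal.ofReal (K * Real.sqrt
            (ψ (max q₁.natAbs q₂.natAbs) / |(q₂ : ℝ)|)) := by
  refine ⟨2 * √(6 / c₁), by positivity, ?_⟩
  intro f hf hf'' _ a b _ ψ _ q₁ q₂ hq₂ x₀ hx₀ p₀ hlo hhi hdist
  set F : ℝ → ℝ := fun x => q₁ * x + q₂ * f x
  set ε := ψ (max q₁.natAbs q₂.natAbs)
  have hdF := deriv_linear_add_const_mul (hf.differentiable two_ne_zero) q₁ q₂
  have hcurv (t : ℝ) : c₁ * |(q₂ : ℝ)| ≤ |deriv (deriv F) t| := by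
    have hd2f : DifferentiableAt ℝ (deriv f) t :=
      (hf.iterate_deriv' 1 1).differentiable one_ne_zero t
    rw [hdF, deriv_const_add, deriv_const_mul _ hd2f, abs_mul, mul_comm]
    exact mul_le_mul_of_nonneg_left (hf'' t).1 (abs_nonneg _)
  have hgrowth := le_abs_sub_of_deriv_eq_zero (F := F) (by fun_prop)
    (by rw [hdF]; exact hx₀) hcurv
  have hcentre : |F x₀ - p₀| < 2 * ε := by
    rwa [← distNearestInt_eq_abs_sub (abs_le.2 ⟨hlo.le, hhi⟩)]
  have hsub : {x ∈ Icc a b | |F x - p₀| < ε} ⊆ {x | |F x - F x₀| < 3 * ε} := by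
    rintro x ⟨-, hx⟩
    have := abs_sub_le (F x) p₀ (F x₀)
    rw [abs_sub_comm (p₀ : ℝ)] at this
    show |F x - F x₀| < 3 * ε
    linarith
  calc volume {x ∈ Icc a b | |F x - p₀| < ε}
      ≤ volume {x | |F x - F x₀| < 3 * ε} := measure_mono hsub
    _ ≤ ENNReal.ofReal (2 * √(3 * ε / (c₁ * |(q₂ : ℝ)| / 2))) :=
      volume_setOf_abs_sub_lt_le_of_quadratic_growth (by positivity) hgrowth _
    _ = ENNReal.ofReal (2 * √(6 / c₁) * √(ε / |(q₂ : ℝ)|)) := by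
      rw [mul_assoc, ← Real.sqrt_mul (by positivity)]
      congr 3
      field_simp
      ring

theorem stmt16 (c₁ c₂ : ℝ) (hc₁ : 0 < c₁) (hc : c₁ ≤ c₂) :
    ∃ K > (0 : ℝ), ∀ f : ℝ → ℝ, ContDiff ℝ 2 f →
      (∀ x, c₁ ≤ |deriv (deriv f) x| ∧ |deriv (deriv f) x| ≤ c₂) →
      ((∀ x, 0 < deriv (deriv f) x) ∨ (∀ x, deriv (deriv f) x < 0)) →
      ∀ a b : ℝ, a ≤ b →
      ∀ ψ : ℕ → ℝ, (∀ q, 0 < ψ q) →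
      ∀ q₁ q₂ : ℤ, q₂ ≠ 0 →
      ∀ x₀ : ℝ, (q₁ : ℝ) + (q₂ : ℝ) * deriv f x₀ = 0 →
      ∀ p₀ : ℤ, -(1/2) < ((q₁ : ℝ) * x₀ + (q₂ : ℝ) * f x₀) - (p₀ : ℝ) →
        ((q₁ : ℝ) * x₀ + (q₂ : ℝ) * f x₀) - (p₀ : ℝ) ≤ 1/2 →
      distNearestInt ((q₁ : ℝ) * x₀ + (q₂ : ℝ) * f x₀) <
          2 * ψ (max q₁.natAbs q₂.natAbs) →
      volume {x ∈ Icc a b | |(q₁ : ℝ) * x + (q₂ : ℝ) * f x - (p₀ : ℝ)| <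
          ψ (max q₁.natAbs q₂.natAbs)}
        ≤ ENNReal.ofReal (K * Real.sqrt
            (ψ (max q₁.natAbs q₂.natAbs) / |(q₂ : ℝ)|)) :=
  stmt16_general c₁ c₂ hc₁
end
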